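/- arXiv:1502.03965 — 3 statements merged into one kernel-verified Lean document; each statement's English description precedes it below -/
import Mathlib

section
/- Let q be a positive integer and G a graph. If u, v ∈ V(G) are joined by q pairwise internally vertex-disjoint paths in G, and F is a treedepth decomposition of G in which u and v are not in ancestor-descendant relation, then height(F) > q. -/
/-- A rooted forest on the vertex type `V`, given by a parent function.
Acyclicity guarantees that following parents never returns to a vertex. -/
structure RootedForest (V : Type*) where
  parent : V → Option V
  acyclic : ∀ v : V, ¬ Relation.TransGen (fun a b => parent a = some b) v v

namespace RootedForest

variable {V : Type*} (F : RootedForest V)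

/-- `F.Anc x y` means that `y` is an ancestor of `x` in the rooted forest `F`
(every vertex is an ancestor of itself). -/
def Anc (x y : V) : Prop :=
  Relation.ReflTransGen (fun a b => F.parent a = some b) x y

/-- `F.ProperAnc x y` means that `y` is a proper ancestor of `x`. -/
def ProperAnc (x y : V) : Prop :=
  Relation.TransGen (fun a b => F.parent a = some b) x y

/-- `x` and `y` are in ancestor–descendant relation in `F`. -/
def AncDesc (x y : V) : Prop := F.Anc x y ∨ F.Anc y x

/-- The depth of `v` in `F`: the number of vertices on the path from `v`
to the root of its tree (including both endpoints). -/
noncomputable def depth (v : V) : ℕ := Nat.card {u : V // F.Anc v u}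

/-- The height of the forest: the maximum depth of a vertex. -/
noncomputable def height : ℕ := sSup (Set.range F.depth)

/-- The reach of `v` in `F`. -/
noncomputable def reach (v : V) : ℕ := F.height - F.depth v

/-- The vertex set of the subtree of `F` rooted at `v` (all descendants of `v`,
including `v` itself). -/
def subtree (v : V) : Set V := {u : V | F.Anc u v}

/-- `x` and `y` lie in the same tree of the forest, i.e. they have a common ancestor. -/
def SameTree (x y : V) : Prop := ∃ w : V, F.Anc x w ∧ F.Anc y w

end RootedForest

/-- `F` is a treedepth decomposition of `G`: a rooted forest on the vertex set of `G`
such that the endpoints of every edge are in ancestor–descendant relation. -/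
def SimpleGraph.IsTreedepthDecomp {V : Type*} (G : SimpleGraph V) (F : RootedForest V) : Prop :=
  ∀ ⦃u v : V⦄, G.Adj u v → F.AncDesc u v

/-- The treedepth of `G`: the minimum height of a treedepth decomposition of `G`. -/
noncomputable def SimpleGraph.treedepth {V : Type*} (G : SimpleGraph V) : ℕ :=
  sInf {n : ℕ | ∃ F : RootedForest V, G.IsTreedepthDecomp F ∧ F.height = n}

/-- The open neighborhood of a vertex set `S`: all vertices outside `S`
with a neighbor in `S`. -/
def SimpleGraph.nbhdSet {V : Type*} (G : SimpleGraph V) (S : Set V) : Set V :=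
  {u : V | u ∉ S ∧ ∃ s ∈ S, G.Adj u s}

/-- `Z` is a treedepth-`η` modulator of `G`: removing `Z` leaves a graph of
treedepth at most `η`. -/
def SimpleGraph.IsTdMod {V : Type*} (G : SimpleGraph V) (η : ℕ) (Z : Set V) : Prop :=
  (G.induce Zᶜ).treedepth ≤ η

/-- `G` contains `m` pairwise internally vertex-disjoint paths between `u` and `v`. -/
def IntDisjointPaths {V : Type*} (G : SimpleGraph V) (u v : V) (m : ℕ) : Prop :=
  ∃ P : Fin m → G.Walk u v, (∀ i, (P i).IsPath) ∧
    ∀ i j, i ≠ j → ∀ w, w ∈ (P i).support → w ∈ (P j).support → w = u ∨ w = v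

/-- A treedepth decomposition is nice if every subtree induces a connected subgraph. -/
def IsNiceDecomp {V : Type*} (G : SimpleGraph V) (F : RootedForest V) : Prop :=
  ∀ v : V, (G.induce (F.subtree v)).Connected

/-! Since the ancestors of a vertex form a chain, every `u`–`v` walk passes through a common
ancestor of `u` and `v`; as `u` and `v` are incomparable it is an internal vertex. The `q`
internally disjoint paths thus give `q` distinct proper ancestors of `u`, so `u` has depth
at least `q + 1`. -/

namespace RootedForest

variable {V : Type*} (F : RootedForest V)

theorem anc_total {u a b : V} (ha : F.Anc u a) (hb : F.Anc u b) : F.Anc a b ∨ F.Anc b a :=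
  Relation.ReflTransGen.total_of_right_unique
    (fun _ _ _ h₁ h₂ => Option.some.inj (h₁.symm.trans h₂)) ha hb

theorem card_le_depth [Finite V] {u : V} {s : Finset V} (hs : ∀ x ∈ s, F.Anc u x) :
    s.card ≤ F.depth u :=
  calc s.card = (s : Set V).ncard := (Set.ncard_coe_finset s).symm
    _ ≤ {x | F.Anc u x}.ncard := Set.ncard_le_ncard hs
    _ = F.depth u := (Nat.card_coe_set_eq _).symm

theorem depth_le_height [Finite V] (v : V) : F.depth v ≤ F.height :=
  le_csSup (Set.finite_range F.depth).bddAbove ⟨v, rfl⟩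

end RootedForest

namespace SimpleGraph.IsTreedepthDecomp

variable {V : Type*} {G : SimpleGraph V} {F : RootedForest V}

theorem exists_mem_support_anc_anc (hF : G.IsTreedepthDecomp F) {a b : V} (p : G.Walk a b) :
    ∃ w ∈ p.support, F.Anc a w ∧ F.Anc b w := by
  induction p with
  | nil => exact ⟨_, Walk.start_mem_support _, .refl, .refl⟩
  | @cons a c b hac p ih =>
    obtain ⟨w, hw, hcw, hbw⟩ := ih
    rcases hF hac with hac | hca
    · exact ⟨w, by simp [hw], hac.trans hcw, hbw⟩
    · rcases F.anc_total hcw hca with hwa | haw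
      · exact ⟨a, by simp, .refl, hbw.trans hwa⟩
      · exact ⟨w, by simp [hw], haw, hbw⟩

theorem exists_internal_anc (hF : G.IsTreedepthDecomp F) {u v : V} (huv : ¬ F.AncDesc u v)
    (p : G.Walk u v) : ∃ w ∈ p.support, w ≠ u ∧ w ≠ v ∧ F.Anc u w := by
  obtain ⟨w, hw, hu, hv⟩ := hF.exists_mem_support_anc_anc p
  refine ⟨w, hw, ?_, ?_, hu⟩ <;> rintro rfl
  exacts [huv (.inr hv), huv (.inl hu)]

end SimpleGraph.IsTreedepthDecomp

theorem height_gt_of_disjoint_paths_general {V : Type*} [Fintype V] (q : ℕ)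
    (G : SimpleGraph V) (u v : V)
    (hpaths : IntDisjointPaths G u v q)
    (F : RootedForest V) (hF : G.IsTreedepthDecomp F)
    (hnad : ¬ F.AncDesc u v) :
    q < F.height := by
  classical
  obtain ⟨P, -, hdisj⟩ := hpaths
  choose w hw_mem hw_ne_u hw_ne_v hw_anc using fun i => hF.exists_internal_anc hnad (P i)
  have hw_inj : Function.Injective w := fun i j hij => by
    by_contra hne
    exact (hdisj i j hne (w i) (hw_mem i) (hij ▸ hw_mem j)).elim (hw_ne_u i) (hw_ne_v i)
  have hu_notMem : u ∉ Finset.univ.image w := by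
    simpa only [Finset.mem_image, Finset.mem_univ, true_and, not_exists] using hw_ne_u
  have hancestors : ∀ x ∈ insert u (Finset.univ.image w), F.Anc u x := by
    simp only [Finset.mem_insert, Finset.mem_image, Finset.mem_univ, true_and]
    rintro x (rfl | ⟨i, rfl⟩)
    exacts [.refl, hw_anc i]
  calc q < (insert u (Finset.univ.image w)).card := by
        rw [Finset.card_insert_of_notMem hu_notMem, Finset.card_image_of_injective _ hw_inj,
          Finset.card_fin]
        exact q.lt_succ_self
    _ ≤ F.depth u := F.card_le_depth hancestors
    _ ≤ F.height := F.depth_le_height u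

/-- If `u` and `v` are joined by `q` pairwise internally vertex-disjoint paths in `G`
and `F` is a treedepth decomposition of `G` in which `u` and `v` are not in
ancestor-descendant relation, then the height of `F` exceeds `q`. -/
theorem height_gt_of_disjoint_paths {V : Type*} [Fintype V] (q : ℕ) (hq : 1 ≤ q)
    (G : SimpleGraph V) (u v : V)
    (hpaths : IntDisjointPaths G u v q)
    (F : RootedForest V) (hF : G.IsTreedepthDecomp F)
    (hnad : ¬ F.AncDesc u v) :
    q < F.height :=
  height_gt_of_disjoint_paths_general q G u v hpaths F hF hnad
end

section
/- Let G be a connected graph, let H be a connected subgraph of G, and let v ∈ V(G) \ V(H) be a vertex such that N_G(H) ⊆ N_G[v]. Then for any treedepth decomposition T of G there exists a treedepth decomposition T' of G such that (1) height(T') ≤ max(height(T), depth(v, T) + td(G[V(H)])), and (2) all vertices of V(H) belong to T'_v, the subtree of T' rooted at v. -/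
/-!
A forest is determined by its ancestor relation, and two surgeries on that relation suffice. Let
`O` be the set of vertices of `H` incomparable with `v` in `T`, and let `S` be an optimal treedepth
decomposition of `G[H]`. First cut `O` out of `T` and hang it, ordered by `S`, below `v`: every
neighbour of `O` outside `O` lies in `N_G[v]` or in `H`, hence is comparable with `v`, and it
cannot be a proper descendant of `v`, so it is an ancestor of `v`. Then cut out `H` together with
all proper descendants of `v` and hang this set below `v`, keeping its induced order. This moves
the vertices of `H` above `v` to a chain right below `v`, on top of the old subtree of `v`. Every
vertex outside `O` ends up with a subset of the old ancestor set of itself or of `v`, and a vertex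
of `O` has at most `height S` ancestors in `O` and `depth v` outside it.
-/

/-- `R a b` reads "`b` is an ancestor of `a`": a partial order in which the ancestors of each
element form a chain. -/
structure IsForestOrder {α : Type*} (R : α → α → Prop) : Prop where
  refl : ∀ a, R a a
  trans : ∀ {a b c}, R a b → R b c → R a c
  antisymm : ∀ {a b}, R a b → R b a → a = b
  chain : ∀ {a b c}, R a b → R a c → R b c ∨ R c b

namespace IsForestOrder

variable {α β : Type*} {R : α → α → Prop}

theorem comap (hR : IsForestOrder R) {f : β → α} (hf : Function.Injective f) :
    IsForestOrder (fun a b => R (f a) (f b)) where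
  refl a := hR.refl (f a)
  trans := hR.trans
  antisymm hab hba := hf (hR.antisymm hab hba)
  chain := hR.chain

theorem of_linearOrder [LinearOrder α] : IsForestOrder (α := α) (· ≤ ·) where
  refl := le_refl
  trans := le_trans
  antisymm := le_antisymm
  chain {_ b c} _ _ := le_total b c

theorem and_ne_of_transGen (hR : IsForestOrder R) {a b : α}
    (h : Relation.TransGen (fun a b => R a b ∧ b ≠ a) a b) : R a b ∧ b ≠ a := by
  induction h with
  | single h => exact h
  | tail _ hbc ih =>
    refine ⟨hR.trans ih.1 hbc.1, fun hca => hbc.2 ?_⟩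
    subst hca
    exact hR.antisymm ih.1 hbc.1

theorem exists_nearest_of_ne [Finite α] (hR : IsForestOrder R) {a b : α} (hab : R a b)
    (hba : b ≠ a) : ∃ p, (R a p ∧ p ≠ a) ∧ ∀ c, R a c → c ≠ a → R p c := by
  obtain ⟨p, ⟨hap, hpa⟩, hmax⟩ := Set.exists_max_image {c | R a c ∧ c ≠ a}
    (fun c => {d | R c d}.ncard) (Set.toFinite _) ⟨b, hab, hba⟩
  refine ⟨p, ⟨hap, hpa⟩, fun c hac hca => ?_⟩
  rcases hR.chain hap hac with hpc | hcp
  · exact hpc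
  by_cases hcp' : c = p
  · exact hcp' ▸ hR.refl c
  have hsub : {d | R p d} ⊂ {d | R c d} :=
    ⟨fun d hpd => hR.trans hcp hpd, fun h => hcp' (hR.antisymm hcp (h (hR.refl c)))⟩
  exact absurd (hmax c ⟨hac, hca⟩) (Set.ncard_lt_ncard hsub).not_ge

end IsForestOrder

namespace RootedForest

variable {α : Type*} {R : α → α → Prop}

open Classical in
noncomputable def ofForestOrder (R : α → α → Prop) (hR : IsForestOrder R) : RootedForest α where
  parent a := if h : ∃ p, (R a p ∧ p ≠ a) ∧ ∀ c, R a c → c ≠ a → R p c then some h.choose else none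
  acyclic a ha := (hR.and_ne_of_transGen (Relation.TransGen.mono (fun b c hbc => by
    split_ifs at hbc with h
    exact Option.some.inj hbc ▸ h.choose_spec.1) a a ha)).2 rfl

theorem ofForestOrder_parent_eq_some {hR : IsForestOrder R} {a p : α}
    (h : (ofForestOrder R hR).parent a = some p) :
    (R a p ∧ p ≠ a) ∧ ∀ c, R a c → c ≠ a → R p c := by
  simp only [ofForestOrder] at h
  split_ifs at h with hex
  exact Option.some.inj h ▸ hex.choose_spec

theorem anc_ofForestOrder [Finite α] (hR : IsForestOrder R) {a b : α} :
    (ofForestOrder R hR).Anc a b ↔ R a b := by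
  refine ⟨fun h => ?_, fun h => ?_⟩
  · induction h with
    | refl => exact hR.refl a
    | tail _ hcd ih => exact hR.trans ih (ofForestOrder_parent_eq_some hcd).1.1
  · induction hn : {c | R a c}.ncard using Nat.strong_induction_on generalizing a with
    | _ n ih =>
    by_cases hba : b = a
    · exact hba ▸ Relation.ReflTransGen.refl
    have hex := hR.exists_nearest_of_ne h hba
    have hpar : (ofForestOrder R hR).parent a = some hex.choose := by
      simp only [ofForestOrder, dif_pos hex]
    obtain ⟨⟨hap, hpa⟩, hnear⟩ := hex.choose_spec
    have hlt : {c | R hex.choose c} ⊂ {c | R a c} :=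
      ⟨fun c hpc => hR.trans hap hpc, fun hsub => hpa (hR.antisymm hap (hsub (hR.refl a))).symm⟩
    exact Relation.ReflTransGen.head hpar
      (ih _ (hn ▸ Set.ncard_lt_ncard hlt) (hnear b h hba) rfl)

theorem isForestOrder_anc (F : RootedForest α) : IsForestOrder F.Anc where
  refl _ := Relation.ReflTransGen.refl
  trans := Relation.ReflTransGen.trans
  antisymm {a b} hab hba := by
    rcases Relation.reflTransGen_iff_eq_or_transGen.1 hab with h | h
    · exact h.symm
    · exact absurd (h.trans_left hba) (F.acyclic a)
  chain hab hac := Relation.ReflTransGen.total_of_right_unique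
    (fun _ _ _ h₁ h₂ => Option.some.inj (h₁.symm.trans h₂)) hab hac

theorem depth_eq_ncard (F : RootedForest α) (a : α) : F.depth a = {b | F.Anc a b}.ncard := by
  rw [RootedForest.depth, ← Nat.card_coe_set_eq]
  rfl

theorem depth_le_height_s8 [Finite α] (F : RootedForest α) (a : α) : F.depth a ≤ F.height :=
  le_csSup (Set.finite_range _).bddAbove ⟨a, rfl⟩

theorem height_le {F : RootedForest α} {n : ℕ} (h : ∀ a, F.depth a ≤ n) : F.height ≤ n :=
  csSup_le' (by rintro _ ⟨a, rfl⟩; exact h a)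

end RootedForest

theorem SimpleGraph.exists_isTreedepthDecomp_height_eq_treedepth {α : Type*} [Finite α]
    (G : SimpleGraph α) : ∃ F : RootedForest α, G.IsTreedepthDecomp F ∧ F.height = G.treedepth := by
  obtain ⟨n, ⟨e⟩⟩ := Finite.exists_equiv_fin α
  let hR := IsForestOrder.of_linearOrder.comap e.injective
  have hne : {k | ∃ F : RootedForest α, G.IsTreedepthDecomp F ∧ F.height = k}.Nonempty :=
    ⟨_, RootedForest.ofForestOrder _ hR, fun a b _ => by
      simp only [RootedForest.AncDesc, RootedForest.anc_ofForestOrder]; exact le_total _ _, rfl⟩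
  exact Nat.sInf_mem hne

section HangBelow

variable {α : Type*}

/-- Delete the set `M` from the forest order `R` and hang it back, ordered by `Q`,
below the vertex `p`. -/
def hangBelow (R : α → α → Prop) (M : Set α) (p : α) (Q : M → M → Prop) (a b : α) : Prop :=
  (∃ (ha : a ∈ M) (hb : b ∈ M), Q ⟨a, ha⟩ ⟨b, hb⟩) ∨ (a ∈ M ∧ b ∉ M ∧ R p b) ∨
    (a ∉ M ∧ b ∉ M ∧ R a b)

variable {R : α → α → Prop} {M : Set α} {p a b : α} {Q : M → M → Prop}

theorem hangBelow_iff_of_mem (ha : a ∈ M) :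
    hangBelow R M p Q a b ↔ (∃ hb : b ∈ M, Q ⟨a, ha⟩ ⟨b, hb⟩) ∨ (b ∉ M ∧ R p b) := by
  simp [hangBelow, ha]

theorem hangBelow_iff_of_notMem (ha : a ∉ M) : hangBelow R M p Q a b ↔ b ∉ M ∧ R a b := by
  simp [hangBelow, ha]

theorem IsForestOrder.hangBelow (hR : IsForestOrder R) (hQ : IsForestOrder Q) :
    IsForestOrder (hangBelow R M p Q) where
  refl a := by
    by_cases ha : a ∈ M
    · exact (hangBelow_iff_of_mem ha).2 (.inl ⟨ha, hQ.refl _⟩)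
    · exact (hangBelow_iff_of_notMem ha).2 ⟨ha, hR.refl a⟩
  trans {a b c} hab hbc := by
    by_cases ha : a ∈ M
    · rw [hangBelow_iff_of_mem ha] at hab ⊢
      rcases hab with ⟨hb, hab⟩ | ⟨hb, hpb⟩
      · rcases (hangBelow_iff_of_mem hb).1 hbc with ⟨hc, hbc⟩ | hc
        · exact .inl ⟨hc, hQ.trans hab hbc⟩
        · exact .inr hc
      · obtain ⟨hc, hbc⟩ := (hangBelow_iff_of_notMem hb).1 hbc
        exact .inr ⟨hc, hR.trans hpb hbc⟩
    · obtain ⟨hb, hab⟩ := (hangBelow_iff_of_notMem ha).1 hab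
      obtain ⟨hc, hbc⟩ := (hangBelow_iff_of_notMem hb).1 hbc
      exact (hangBelow_iff_of_notMem ha).2 ⟨hc, hR.trans hab hbc⟩
  antisymm {a b} hab hba := by
    by_cases ha : a ∈ M
    · rcases (hangBelow_iff_of_mem ha).1 hab with ⟨hb, hab⟩ | ⟨hb, -⟩
      · rcases (hangBelow_iff_of_mem hb).1 hba with ⟨_, hba⟩ | ⟨ha', -⟩
        · exact congrArg Subtype.val (hQ.antisymm hab hba)
        · exact absurd ha ha'
      · exact absurd ha ((hangBelow_iff_of_notMem hb).1 hba).1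
    · obtain ⟨hb, hab⟩ := (hangBelow_iff_of_notMem ha).1 hab
      exact hR.antisymm hab ((hangBelow_iff_of_notMem hb).1 hba).2
  chain {a b c} hab hac := by
    by_cases ha : a ∈ M
    · rcases (hangBelow_iff_of_mem ha).1 hab with ⟨hb, hab⟩ | ⟨hb, hpb⟩ <;>
        rcases (hangBelow_iff_of_mem ha).1 hac with ⟨hc, hac⟩ | ⟨hc, hpc⟩
      · rcases hQ.chain hab hac with hbc | hcb
        · exact .inl ((hangBelow_iff_of_mem hb).2 (.inl ⟨hc, hbc⟩))
        · exact .inr ((hangBelow_iff_of_mem hc).2 (.inl ⟨hb, hcb⟩))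
      · exact .inl ((hangBelow_iff_of_mem hb).2 (.inr ⟨hc, hpc⟩))
      · exact .inr ((hangBelow_iff_of_mem hc).2 (.inr ⟨hb, hpb⟩))
      · rcases hR.chain hpb hpc with hbc | hcb
        · exact .inl ((hangBelow_iff_of_notMem hb).2 ⟨hc, hbc⟩)
        · exact .inr ((hangBelow_iff_of_notMem hc).2 ⟨hb, hcb⟩)
    · obtain ⟨hb, hab⟩ := (hangBelow_iff_of_notMem ha).1 hab
      obtain ⟨hc, hac⟩ := (hangBelow_iff_of_notMem ha).1 hac
      rcases hR.chain hab hac with hbc | hcb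
      · exact .inl ((hangBelow_iff_of_notMem hb).2 ⟨hc, hbc⟩)
      · exact .inr ((hangBelow_iff_of_notMem hc).2 ⟨hb, hcb⟩)

theorem hangBelow_restrict (h : hangBelow R M p (fun c d : M => R c d) a b) : R a b ∨ R p b := by
  rcases h with ⟨_, _, h⟩ | ⟨_, _, h⟩ | ⟨_, _, h⟩
  exacts [.inl h, .inr h, .inl h]

end HangBelow

namespace RootedForest

variable {V : Type*} (T : RootedForest V) (H : Set V) (v : V) (S : RootedForest H)

def offBranch : Set V := {x | x ∈ H ∧ ¬ T.AncDesc x v}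

theorem offBranch_subset : T.offBranch H v ⊆ H := fun _ hx => hx.1

def hangOffBranch : V → V → Prop :=
  hangBelow T.Anc (T.offBranch H v) v fun a b =>
    S.Anc (Set.inclusion (T.offBranch_subset H v) a) (Set.inclusion (T.offBranch_subset H v) b)

def switchedSet : Set V := {x | x ∈ H ∨ (T.Anc x v ∧ x ≠ v)}

def switchOrder : V → V → Prop :=
  hangBelow (T.hangOffBranch H v S) (T.switchedSet H v) v fun a b => T.hangOffBranch H v S a b

theorem isForestOrder_hangOffBranch : IsForestOrder (T.hangOffBranch H v S) :=
  T.isForestOrder_anc.hangBelow (S.isForestOrder_anc.comap (Set.inclusion_injective _))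

theorem isForestOrder_switchOrder : IsForestOrder (T.switchOrder H v S) :=
  (T.isForestOrder_hangOffBranch H v S).hangBelow
    ((T.isForestOrder_hangOffBranch H v S).comap Subtype.val_injective)

noncomputable def switchForest : RootedForest V :=
  ofForestOrder _ (T.isForestOrder_switchOrder H v S)

variable {G : SimpleGraph V} {T H v S}

theorem AncDesc.of_anc {x y : V} (hxy : T.Anc x y) (hx : T.AncDesc x v) : T.AncDesc y v := by
  rcases hx with hxv | hvx
  · exact T.isForestOrder_anc.chain hxy hxv
  · exact .inr (hvx.trans hxy)

theorem ancDesc_of_adj (hT : G.IsTreedepthDecomp T) (hN : G.nbhdSet H ⊆ insert v (G.neighborSet v))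
    {x h : V} (hx : x ∉ T.offBranch H v) (hxh : G.Adj x h) (hh : h ∈ H) : T.AncDesc x v := by
  by_cases hxH : x ∈ H
  · by_contra hxv
    exact hx ⟨hxH, hxv⟩
  rcases hN ⟨hxH, h, hh, hxh⟩ with rfl | hvx
  · exact .inl .refl
  · exact (hT hvx).symm

theorem hangOffBranch_of_adj_of_anc (hT : G.IsTreedepthDecomp T)
    (hS : (G.induce H).IsTreedepthDecomp S) (hN : G.nbhdSet H ⊆ insert v (G.neighborSet v))
    {x y : V} (hxy : G.Adj x y) (h : T.Anc x y) :
    T.hangOffBranch H v S x y ∨ T.hangOffBranch H v S y x := by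
  by_cases hx : x ∈ T.offBranch H v <;> by_cases hy : y ∈ T.offBranch H v
  · rcases hS (show (G.induce H).Adj ⟨x, hx.1⟩ ⟨y, hy.1⟩ from hxy) with hS | hS
    · exact .inl (.inl ⟨hx, hy, hS⟩)
    · exact .inr (.inl ⟨hy, hx, hS⟩)
  · refine .inl (.inr (.inl ⟨hx, hy, ?_⟩))
    rcases ancDesc_of_adj hT hN hy hxy.symm hx.1 with hyv | hvy
    · exact absurd (.inl (h.trans hyv)) hx.2
    · exact hvy
  · exact absurd (AncDesc.of_anc h (ancDesc_of_adj hT hN hx hxy hy.1)) hy.2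
  · exact .inl (.inr (.inr ⟨hx, hy, h⟩))

theorem self_notMem_offBranch (hv : v ∉ H) : v ∉ T.offBranch H v := fun hvO => hv hvO.1

theorem self_notMem_switchedSet (hv : v ∉ H) : v ∉ T.switchedSet H v :=
  fun hvM => hvM.elim hv fun h => h.2 rfl

theorem setOf_hangOffBranch_subset_of_notMem {x : V} (hx : x ∉ T.offBranch H v) :
    {y | T.hangOffBranch H v S x y} ⊆ {y | T.Anc x y} :=
  fun _ (h : T.hangOffBranch H v S x _) => ((hangBelow_iff_of_notMem hx).1 h).2

theorem setOf_hangOffBranch_subset_of_mem {x : V} (hx : x ∈ T.offBranch H v) :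
    {y | T.hangOffBranch H v S x y} ⊆ Subtype.val '' {c | S.Anc ⟨x, hx.1⟩ c} ∪ {y | T.Anc v y} := by
  intro y (h : T.hangOffBranch H v S x y)
  rcases (hangBelow_iff_of_mem hx).1 h with ⟨hy, hxy⟩ | ⟨-, hvy⟩
  · exact .inl ⟨_, hxy, rfl⟩
  · exact .inr hvy

theorem anc_of_notMem_switchedSet {x : V} (hx : x ∉ T.switchedSet H v) (h : T.AncDesc x v) :
    T.Anc v x := by
  refine h.elim (fun hxv => ?_) id
  by_cases hxv' : x = v
  · exact hxv' ▸ .refl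
  · exact absurd (.inr ⟨hxv, hxv'⟩) hx

theorem ancDesc_of_mem_switchedSet {x : V} (hx : x ∈ T.switchedSet H v)
    (hxO : x ∉ T.offBranch H v) : T.AncDesc x v := by
  rcases hx with hxH | ⟨hxv, -⟩
  · by_contra hxv
    exact hxO ⟨hxH, hxv⟩
  · exact .inl hxv

theorem switchOrder_of_adj_of_hangOffBranch (hT : G.IsTreedepthDecomp T)
    (hN : G.nbhdSet H ⊆ insert v (G.neighborSet v)) (hv : v ∉ H) {x y : V} (hxy : G.Adj x y)
    (h : T.hangOffBranch H v S x y) : T.switchOrder H v S x y ∨ T.switchOrder H v S y x := by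
  have hvO := self_notMem_offBranch (T := T) hv
  by_cases hx : x ∈ T.switchedSet H v <;> by_cases hy : y ∈ T.switchedSet H v
  · exact .inl (.inl ⟨hx, hy, h⟩)
  · have hyO : y ∉ T.offBranch H v := fun hyO => hy (.inl hyO.1)
    refine .inl (.inr (.inl ⟨hx, hy, (hangBelow_iff_of_notMem hvO).2 ⟨hyO, ?_⟩⟩))
    by_cases hxO : x ∈ T.offBranch H v
    · exact (((hangBelow_iff_of_mem hxO).1 h).resolve_left fun ⟨hyO', _⟩ => hyO hyO').2
    · have hxy' := ((hangBelow_iff_of_notMem hxO).1 h).2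
      exact anc_of_notMem_switchedSet hy (AncDesc.of_anc hxy' (ancDesc_of_mem_switchedSet hx hxO))
  · have hxO : x ∉ T.offBranch H v := fun hxO => hx (.inl hxO.1)
    have hxy' := ((hangBelow_iff_of_notMem hxO).1 h).2
    refine .inr (.inr (.inl ⟨hy, hx, (hangBelow_iff_of_notMem hvO).2
      ⟨hxO, anc_of_notMem_switchedSet hx ?_⟩⟩))
    rcases hy with hyH | ⟨hyv, -⟩
    · exact ancDesc_of_adj hT hN hxO hxy hyH
    · exact .inl (hxy'.trans hyv)
  · exact .inl (.inr (.inr ⟨hx, hy, h⟩))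

theorem exists_setOf_switchOrder_subset (hv : v ∉ H) {x : V} (hx : x ∉ T.offBranch H v) :
    ∃ w, {y | T.switchOrder H v S x y} ⊆ {y | T.Anc w y} := by
  by_cases hM : x ∈ T.switchedSet H v
  · have hsub : {y | T.switchOrder H v S x y} ⊆ {y | T.Anc x y} ∪ {y | T.Anc v y} :=
      fun _ h => (hangBelow_restrict h).imp (fun h => setOf_hangOffBranch_subset_of_notMem hx h)
        (fun h => setOf_hangOffBranch_subset_of_notMem (self_notMem_offBranch hv) h)
    rcases ancDesc_of_mem_switchedSet hM hx with hxv | hvx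
    · exact ⟨x, hsub.trans (Set.union_subset le_rfl fun y hvy => hxv.trans hvy)⟩
    · exact ⟨v, hsub.trans (Set.union_subset (fun y hxy => hvx.trans hxy) le_rfl)⟩
  · exact ⟨x, fun _ (h : T.switchOrder H v S x _) => setOf_hangOffBranch_subset_of_notMem hx
      ((hangBelow_iff_of_notMem hM).1 h).2⟩

section Finite

variable [Finite V]

theorem anc_switchForest {x y : V} :
    (T.switchForest H v S).Anc x y ↔ T.switchOrder H v S x y :=
  anc_ofForestOrder _

theorem isTreedepthDecomp_switchForest (hT : G.IsTreedepthDecomp T)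
    (hS : (G.induce H).IsTreedepthDecomp S) (hN : G.nbhdSet H ⊆ insert v (G.neighborSet v))
    (hv : v ∉ H) : G.IsTreedepthDecomp (T.switchForest H v S) := by
  intro x y hxy
  simp only [AncDesc, anc_switchForest]
  have hT' : T.hangOffBranch H v S x y ∨ T.hangOffBranch H v S y x :=
    (hT hxy).elim (hangOffBranch_of_adj_of_anc hT hS hN hxy)
      fun h => (hangOffBranch_of_adj_of_anc hT hS hN hxy.symm h).symm
  rcases hT' with h | h
  · exact switchOrder_of_adj_of_hangOffBranch hT hN hv hxy h
  · exact (switchOrder_of_adj_of_hangOffBranch hT hN hv hxy.symm h).symm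

theorem subset_subtree_switchForest (hv : v ∉ H) : H ⊆ (T.switchForest H v S).subtree v :=
  fun _ hx => anc_switchForest.2 (.inr (.inl ⟨.inl hx, self_notMem_switchedSet hv,
    (hangBelow_iff_of_notMem (self_notMem_offBranch hv)).2 ⟨self_notMem_offBranch hv, .refl⟩⟩))

theorem depth_switchForest_le_height (hv : v ∉ H) {x : V} (hx : x ∉ T.offBranch H v) :
    (T.switchForest H v S).depth x ≤ T.height := by
  obtain ⟨w, hw⟩ := exists_setOf_switchOrder_subset (S := S) hv hx
  calc (T.switchForest H v S).depth x = {y | T.switchOrder H v S x y}.ncard := by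
        simp only [depth_eq_ncard, anc_switchForest]
    _ ≤ T.depth w := (Set.ncard_le_ncard hw).trans_eq (depth_eq_ncard T w).symm
    _ ≤ T.height := T.depth_le_height_s8 w

theorem depth_switchForest_le_of_mem (hv : v ∉ H) {x : V} (hx : x ∈ T.offBranch H v) :
    (T.switchForest H v S).depth x ≤ T.depth v + S.height := by
  have hsub : {y | T.switchOrder H v S x y} ⊆
      Subtype.val '' {c | S.Anc ⟨x, hx.1⟩ c} ∪ {y | T.Anc v y} := fun y h =>
    (hangBelow_restrict h).elim (fun h => setOf_hangOffBranch_subset_of_mem hx h)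
      fun hvy => .inr (setOf_hangOffBranch_subset_of_notMem (self_notMem_offBranch hv) hvy)
  calc (T.switchForest H v S).depth x = {y | T.switchOrder H v S x y}.ncard := by
        simp only [depth_eq_ncard, anc_switchForest]
    _ ≤ (Subtype.val '' {c | S.Anc ⟨x, hx.1⟩ c}).ncard + {y | T.Anc v y}.ncard :=
        (Set.ncard_le_ncard hsub).trans (Set.ncard_union_le _ _)
    _ ≤ S.depth ⟨x, hx.1⟩ + T.depth v := by
        rw [depth_eq_ncard, depth_eq_ncard]
        exact add_le_add_left Set.ncard_image_le _
    _ ≤ T.depth v + S.height := by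
        rw [add_comm]
        exact add_le_add_right (S.depth_le_height_s8 _) _

theorem height_switchForest_le (hv : v ∉ H) :
    (T.switchForest H v S).height ≤ max T.height (T.depth v + S.height) :=
  height_le fun x => by
    by_cases hx : x ∈ T.offBranch H v
    · exact le_max_of_le_right (depth_switchForest_le_of_mem hv hx)
    · exact le_max_of_le_left (depth_switchForest_le_height hv hx)

end Finite

end RootedForest

theorem switch_lemma_general {V : Type*} [Fintype V] (G : SimpleGraph V)
    (H : G.Subgraph)
    (v : V) (hv : v ∉ H.verts)
    (hN : G.nbhdSet H.verts ⊆ insert v (G.neighborSet v))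
    (T : RootedForest V) (hT : G.IsTreedepthDecomp T) :
    ∃ T' : RootedForest V, G.IsTreedepthDecomp T' ∧
      T'.height ≤ max T.height (T.depth v + (G.induce H.verts).treedepth) ∧
      H.verts ⊆ T'.subtree v := by
  obtain ⟨S, hS, hSh⟩ := (G.induce H.verts).exists_isTreedepthDecomp_height_eq_treedepth
  exact ⟨T.switchForest H.verts v S, RootedForest.isTreedepthDecomp_switchForest hT hS hN hv,
    hSh ▸ RootedForest.height_switchForest_le hv, RootedForest.subset_subtree_switchForest hv⟩

/-- Let `G` be a connected graph, `H` a connected subgraph of `G`, and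
`v ∈ V(G) \ V(H)` with `N_G(H) ⊆ N_G[v]`. For any treedepth decomposition `T` of `G`
there is a treedepth decomposition `T'` of `G` with
`height T' ≤ max (height T) (depth v T + td(G[V(H)]))` in which all vertices of `H`
belong to the subtree rooted at `v`. -/
theorem switch_lemma {V : Type*} [Fintype V] (G : SimpleGraph V) (hG : G.Connected)
    (H : G.Subgraph) (hH : H.Connected)
    (v : V) (hv : v ∉ H.verts)
    (hN : G.nbhdSet H.verts ⊆ insert v (G.neighborSet v))
    (T : RootedForest V) (hT : G.IsTreedepthDecomp T) :
    ∃ T' : RootedForest V, G.IsTreedepthDecomp T' ∧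
      T'.height ≤ max T.height (T.depth v + (G.induce H.verts).treedepth) ∧
      H.verts ⊆ T'.subtree v :=
  switch_lemma_general G H v hv hN T hT
end

section
/- Fix an integer d ≥ 3 and positive integers n, k with n = dk, and let 𝒻 be a family of d-element subsets of [n]. Let G' be the graph constructed from ([n], 𝒻, k) as follows: the matrix vertices are M = {v_{i,j} : i ∈ [n], j ∈ [k]}, and for each j ∈ [k] the set {v_{i,j} : i ∈ [n]} induces a clique; for each i ∈ [n] there is a dummy clique D_i of d − 1 vertices, each adjacent to all of {v_{i,j} : j ∈ [k]}; and for each d-element subset X of [n] with X ∉ 𝒻 and each j ∈ [k] there is an enforcer vertex f_{j,X} whose neighborhood is exactly {v_{i,j} : i ∈ X}. Suppose X_1, …, X_k ∈ 𝒻 partition [n], and let S' = {v_{i,j} : j ∈ [k], i ∉ X_j}. Then no connected component of G' − S' contains a simple path on 4d vertices. -/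
/-- Index type for the enforcer vertices: `d`-element subsets of `[n]` not in `𝒻`. -/
abbrev EnforcerIdx (n d : ℕ) (𝒻 : Finset (Finset (Fin n))) : Type :=
  {X : Finset (Fin n) // X.card = d ∧ X ∉ 𝒻}

/-- The vertex type of the lower-bound construction: matrix vertices `v_{i,j}`,
dummy vertices (`d - 1` per row), and enforcer vertices `f_{j,X}`. -/
abbrev CVert (n k d : ℕ) (𝒻 : Finset (Finset (Fin n))) : Type :=
  (Fin n × Fin k) ⊕ (Fin n × Fin (d - 1)) ⊕ (EnforcerIdx n d 𝒻 × Fin k)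

/-- The generating relation for the edges of the construction. -/
def CRel (n k d : ℕ) (𝒻 : Finset (Finset (Fin n))) :
    CVert n k d 𝒻 → CVert n k d 𝒻 → Prop
  | Sum.inl (_, j), Sum.inl (_, j') => j = j'
  | Sum.inr (Sum.inl (i, _)), Sum.inr (Sum.inl (i', _)) => i = i'
  | Sum.inr (Sum.inl (i, _)), Sum.inl (i', _) => i = i'
  | Sum.inr (Sum.inr (X, j)), Sum.inl (i, j') => j = j' ∧ i ∈ X.1
  | _, _ => False

/-- The graph `G'` of the lower-bound construction: each column of the matrix is a clique;
each dummy clique `D_i` (of `d - 1` vertices) is complete to row `i`; each enforcer vertex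
`f_{j,X}` is adjacent exactly to `{v_{i,j} : i ∈ X}`. -/
def CGraph (n k d : ℕ) (𝒻 : Finset (Finset (Fin n))) : SimpleGraph (CVert n k d 𝒻) :=
  SimpleGraph.fromRel (CRel n k d 𝒻)

/-!
After deleting `S'`, the surviving matrix vertices are `v_{i,σ i}`, where `σ i` is the block
of the partition containing `i`, and every edge stays inside one block, so a path lives in a
single block `j`. It therefore meets at most `|X_j| = d` matrix vertices. Enforcers are adjacent
only to matrix vertices, so every enforcer on the path but the first is preceded by a matrix
vertex: at most `d + 1` enforcers. A dummy clique `D_i` is attached to the rest of the graph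
only through the single surviving vertex `v_{i,σ i}`, which the path visits at most once; hence
every run of dummies on the path contains an end of the path, and the path meets at most two
dummy cliques, in at most `2(d - 1)` vertices. Altogether the path has at most `4d - 1` vertices.
-/

theorem List.Nodup.countP_le_card {α : Type*} [DecidableEq α] {l : List α} (hl : l.Nodup)
    {p : α → Bool} {s : Finset α} (h : ∀ a ∈ l, p a → a ∈ s) : l.countP p ≤ s.card := by
  rw [List.countP_eq_length_filter, ← List.toFinset_card_of_nodup (hl.filter p)]
  exact Finset.card_le_card fun a ha => by
    simp only [List.mem_toFinset, List.mem_filter] at ha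
    exact h a ha.1 ha.2

theorem List.IsChain.countP_le_countP_cons {α : Type*} {R : α → α → Prop} {p q : α → Bool}
    (hpq : ∀ a b, R a b → p b → q a) :
    ∀ {a : α} {l : List α}, (a :: l).IsChain R → l.countP p ≤ (a :: l).countP q
  | _, [], _ => by simp
  | a, b :: l, h => by
    have ih := countP_le_countP_cons hpq (isChain_cons_cons.1 h).2
    have hab := hpq a b (isChain_cons_cons.1 h).1
    simp only [countP_cons] at ih ⊢
    by_cases hb : p b <;> simp_all; omega

theorem List.IsChain.countP_le_countP_add_one {α : Type*} {R : α → α → Prop} {p q : α → Bool}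
    (hpq : ∀ a b, R a b → p b → q a) {l : List α} (hl : l.IsChain R) :
    l.countP p ≤ l.countP q + 1 := by
  rcases l with _ | ⟨a, l⟩
  · simp
  · have := hl.countP_le_countP_cons hpq
    rw [countP_cons]
    split_ifs <;> omega

namespace CGraph

open Finset

variable {n k d : ℕ} {𝒻 : Finset (Finset (Fin n))}

def isMatrix : CVert n k d 𝒻 → Bool
  | .inl _ => true
  | _ => false

def isDummy : CVert n k d 𝒻 → Bool
  | .inr (.inl _) => true
  | _ => false

def isEnforcer : CVert n k d 𝒻 → Bool
  | .inr (.inr _) => true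
  | _ => false

theorem countP_isMatrix_add_isDummy_add_isEnforcer (l : List (CVert n k d 𝒻)) :
    l.countP isMatrix + l.countP isDummy + l.countP isEnforcer = l.length := by
  induction l with
  | nil => rfl
  | cons a l ih =>
    rcases a with _ | _ | _ <;>
      simp [List.countP_cons, isMatrix, isDummy, isEnforcer] <;> omega

theorem isMatrix_of_adj_enforcer {w : CVert n k d 𝒻} {Y : EnforcerIdx n d 𝒻} {j : Fin k}
    (h : (CGraph n k d 𝒻).Adj w (.inr (.inr (Y, j)))) : isMatrix w := by
  rcases w with _ | _ | _ <;> simp_all [CGraph, CRel, isMatrix]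

theorem eq_dummy_or_eq_matrix_of_adj_dummy {i : Fin n} {c : Fin (d - 1)} {w : CVert n k d 𝒻}
    (h : (CGraph n k d 𝒻).Adj (.inr (.inl (i, c))) w) :
    (∃ c', w = .inr (.inl (i, c'))) ∨ ∃ j, w = .inl (i, j) := by
  rcases w with ⟨i', j⟩ | ⟨i', c'⟩ | _ <;> simp_all [CGraph, CRel, eq_comm]

variable (σ : Fin n → Fin k)

def Survives (w : CVert n k d 𝒻) : Prop :=
  ∀ i j, w = .inl (i, j) → j = σ i

def block : CVert n k d 𝒻 → Fin k
  | .inl (_, j) => j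
  | .inr (.inl (i, _)) => σ i
  | .inr (.inr (_, j)) => j

variable {σ}

theorem block_eq_of_adj {a b : CVert n k d 𝒻} (h : (CGraph n k d 𝒻).Adj a b)
    (ha : Survives σ a) (hb : Survives σ b) : block σ a = block σ b := by
  rcases a with ⟨i, j⟩ | ⟨i, c⟩ | ⟨Y, j⟩ <;> rcases b with ⟨i', j'⟩ | ⟨i', c'⟩ | ⟨Y', j'⟩ <;>
    simp_all [CGraph, CRel, block, Survives] <;> grind

theorem block_eq_of_mem {l : List (CVert n k d 𝒻)} (hc : l.IsChain (CGraph n k d 𝒻).Adj)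
    (hsurv : ∀ w ∈ l, Survives σ w) {a b : CVert n k d 𝒻} (ha : a ∈ l) (hb : b ∈ l) :
    block σ a = block σ b := by
  have hne : l ≠ [] := List.ne_nil_of_mem ha
  have key := (List.IsChain.iff_mem.1 hc).induction (block σ · = block σ (l.head hne)) l
    (fun x y hxy hx => (block_eq_of_adj hxy.2.2 (hsurv x hxy.1) (hsurv y hxy.2.1)).symm.trans hx)
    (fun _ => rfl)
  rw [key a ha, key b hb]

theorem countP_isMatrix_le {l : List (CVert n k d 𝒻)} (hc : l.IsChain (CGraph n k d 𝒻).Adj)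
    (hnd : l.Nodup) (hsurv : ∀ w ∈ l, Survives σ w) {a : CVert n k d 𝒻} (ha : a ∈ l) :
    l.countP isMatrix ≤ #{i | σ i = block σ a} := by
  refine (hnd.countP_le_card (s := ({i | σ i = block σ a} : Finset (Fin n)).image
    fun i => .inl (i, block σ a)) ?_).trans Finset.card_image_le
  rintro (⟨i, j⟩ | _ | _) hw hmat <;> simp only [isMatrix, Bool.false_eq_true] at hmat
  have hj : j = σ i := hsurv _ hw i j rfl
  have hblock : j = block σ a := block_eq_of_mem hc hsurv hw ha
  simp [hblock, ← hj]

theorem countP_isEnforcer_le {l : List (CVert n k d 𝒻)} (hc : l.IsChain (CGraph n k d 𝒻).Adj) :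
    l.countP isEnforcer ≤ l.countP isMatrix + 1 :=
  hc.countP_le_countP_add_one fun a b hab hb => by
    rcases b with _ | _ | ⟨Y, j⟩ <;> simp only [isEnforcer, Bool.false_eq_true] at hb
    exact isMatrix_of_adj_enforcer hab

def dummyClique (i : Fin n) : Finset (CVert n k d 𝒻) :=
  univ.image fun c => .inr (.inl (i, c))

theorem mem_dummyClique {i : Fin n} {w : CVert n k d 𝒻} :
    w ∈ dummyClique i ↔ ∃ c, w = .inr (.inl (i, c)) := by
  simp [dummyClique, eq_comm]

theorem card_dummyClique_le (i : Fin n) : #(dummyClique (k := k) (d := d) (𝒻 := 𝒻) i) ≤ d - 1 :=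
  card_image_le.trans (by simp)

theorem forall_mem_dummyClique_or_exists_inl_mem {i : Fin n} :
    ∀ {x : CVert n k d 𝒻} {l : List (CVert n k d 𝒻)}, (x :: l).IsChain (CGraph n k d 𝒻).Adj →
      x ∈ dummyClique i → (∀ y ∈ l, y ∈ dummyClique i) ∨ ∃ j, .inl (i, j) ∈ l
  | _, [], _, _ => .inl (by simp)
  | x, b :: l, hc, hx => by
    obtain ⟨c, rfl⟩ := mem_dummyClique.1 hx
    rcases eq_dummy_or_eq_matrix_of_adj_dummy (List.isChain_cons_cons.1 hc).1 with ⟨c', rfl⟩ | ⟨j, rfl⟩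
    · have hb : (.inr (.inl (i, c')) : CVert n k d 𝒻) ∈ dummyClique i :=
        mem_dummyClique.2 ⟨c', rfl⟩
      rcases forall_mem_dummyClique_or_exists_inl_mem (List.isChain_cons_cons.1 hc).2 hb with
        h | ⟨j, hj⟩
      · exact .inl (List.forall_mem_cons.2 ⟨hb, h⟩)
      · exact .inr ⟨j, List.mem_cons_of_mem _ hj⟩
    · exact .inr ⟨j, List.mem_cons_self⟩

theorem forall_mem_dummyClique_prefix_or_suffix {i : Fin n} {x : CVert n k d 𝒻}
    {l₁ l₂ : List (CVert n k d 𝒻)} (hc : (l₁ ++ x :: l₂).IsChain (CGraph n k d 𝒻).Adj)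
    (hnd : (l₁ ++ x :: l₂).Nodup) (hsurv : ∀ w ∈ l₁ ++ x :: l₂, Survives σ w)
    (hx : x ∈ dummyClique i) :
    (∀ y ∈ l₁, y ∈ dummyClique i) ∨ ∀ y ∈ l₂, y ∈ dummyClique i := by
  have hc₁ : (x :: l₁.reverse).IsChain (CGraph n k d 𝒻).Adj := by
    rw [List.append_cons, List.isChain_append] at hc
    simpa using List.isChain_reverse.2 (hc.1.imp fun _ _ h => h.symm)
  rcases forall_mem_dummyClique_or_exists_inl_mem hc₁ hx with h₁ | ⟨j₁, hj₁⟩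
  · exact .inl fun y hy => h₁ y (List.mem_reverse.2 hy)
  rcases forall_mem_dummyClique_or_exists_inl_mem (List.isChain_append.1 hc).2.1 hx with
    h₂ | ⟨j₂, hj₂⟩
  · exact .inr h₂
  rw [List.mem_reverse] at hj₁
  have hj : j₁ = j₂ :=
    (hsurv _ (List.mem_append_left _ hj₁) i j₁ rfl).trans
      (hsurv _ (List.mem_append_right _ (List.mem_cons_of_mem _ hj₂)) i j₂ rfl).symm
  subst hj
  exact ((List.nodup_append.1 hnd).2.2 _ hj₁ _ (List.mem_cons_of_mem _ hj₂) rfl).elim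

def dummyCliqueOf : CVert n k d 𝒻 → Finset (CVert n k d 𝒻)
  | .inr (.inl (i, _)) => dummyClique i
  | _ => ∅

theorem dummyCliqueOf_eq {i : Fin n} {w : CVert n k d 𝒻} (h : w ∈ dummyClique i) :
    dummyCliqueOf w = dummyClique i := by
  obtain ⟨c, rfl⟩ := mem_dummyClique.1 h
  rfl

theorem card_dummyCliqueOf_le (w : CVert n k d 𝒻) : #(dummyCliqueOf w) ≤ d - 1 := by
  rcases w with _ | ⟨i, c⟩ | _
  · simp [dummyCliqueOf]
  · exact card_dummyClique_le i
  · simp [dummyCliqueOf]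

theorem isDummy_mem_dummyCliqueOf_head_or_getLast {l : List (CVert n k d 𝒻)}
    (hc : l.IsChain (CGraph n k d 𝒻).Adj) (hnd : l.Nodup) (hsurv : ∀ w ∈ l, Survives σ w)
    (hne : l ≠ []) {x : CVert n k d 𝒻} (hx : x ∈ l) (hdum : isDummy x) :
    x ∈ dummyCliqueOf (l.head hne) ∨ x ∈ dummyCliqueOf (l.getLast hne) := by
  rcases x with _ | ⟨i, c⟩ | _ <;> simp only [isDummy, Bool.false_eq_true] at hdum
  have hxi : (.inr (.inl (i, c)) : CVert n k d 𝒻) ∈ dummyClique i := mem_dummyClique.2 ⟨c, rfl⟩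
  obtain ⟨l₁, l₂, rfl⟩ := List.append_of_mem hx
  rcases forall_mem_dummyClique_prefix_or_suffix hc hnd hsurv hxi with h | h
  · left
    rw [dummyCliqueOf_eq (i := i)]
    · exact hxi
    · cases l₁ with
      | nil => exact hxi
      | cons a _ => exact h a List.mem_cons_self
  · right
    rw [dummyCliqueOf_eq (i := i)]
    · exact hxi
    · rw [List.getLast_append_of_ne_nil _ (List.cons_ne_nil _ _)]
      rcases List.mem_cons.1 (List.getLast_mem (List.cons_ne_nil _ l₂)) with h' | h'
      · exact h' ▸ hxi
      · exact h _ h'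

theorem countP_isDummy_le {l : List (CVert n k d 𝒻)} (hc : l.IsChain (CGraph n k d 𝒻).Adj)
    (hnd : l.Nodup) (hsurv : ∀ w ∈ l, Survives σ w) : l.countP isDummy ≤ 2 * (d - 1) := by
  rcases eq_or_ne l [] with rfl | hne
  · simp
  calc l.countP isDummy
      ≤ #(dummyCliqueOf (l.head hne) ∪ dummyCliqueOf (l.getLast hne)) :=
        hnd.countP_le_card fun x hx hdum => mem_union.2 <|
          isDummy_mem_dummyCliqueOf_head_or_getLast hc hnd hsurv hne hx hdum
    _ ≤ #(dummyCliqueOf (l.head hne)) + #(dummyCliqueOf (l.getLast hne)) := card_union_le _ _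
    _ ≤ 2 * (d - 1) := by
      have := card_dummyCliqueOf_le (l.head hne)
      have := card_dummyCliqueOf_le (l.getLast hne)
      omega

end CGraph

open CGraph in
theorem no_long_path_after_deletion_general (d n k : ℕ) (𝒻 : Finset (Finset (Fin n)))
    (hcard : ∀ X ∈ 𝒻, X.card = d)
    (X : Fin k → Finset (Fin n)) (hX : ∀ j : Fin k, X j ∈ 𝒻)
    (hpart : ∀ i : Fin n, ∃! j : Fin k, i ∈ X j)
    (S' : Set (CVert n k d 𝒻))
    (hS' : S' = {w : CVert n k d 𝒻 | ∃ i : Fin n, ∃ j : Fin k,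
      w = Sum.inl (i, j) ∧ i ∉ X j}) :
    ¬ ∃ (u v : ↥(S'ᶜ : Set (CVert n k d 𝒻)))
        (p : ((CGraph n k d 𝒻).induce (S'ᶜ : Set (CVert n k d 𝒻))).Walk u v),
        p.IsPath ∧ p.length + 1 = 4 * d := by
  subst hS'
  rintro ⟨u, v, p, hp, hlen⟩
  choose σ hσ hσ_unique using hpart
  set l := p.support.map Subtype.val
  have hc : l.IsChain (CGraph n k d 𝒻).Adj := (List.isChain_map _).2 p.isChain_adj_support
  have hnd : l.Nodup := hp.support_nodup.map Subtype.val_injective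
  have hsurv : ∀ w ∈ l, Survives σ w := by
    rintro _ hw i j rfl
    obtain ⟨w, -, hw⟩ := List.mem_map.1 hw
    exact hσ_unique i j (by_contra fun h => w.2 ⟨i, j, hw, h⟩)
  have hu : u.1 ∈ l := List.mem_map_of_mem p.start_mem_support
  have hmat : l.countP isMatrix ≤ d := by
    refine (countP_isMatrix_le hc hnd hsurv hu).trans ?_
    refine (Finset.card_le_card fun i hi => ?_).trans (hcard _ (hX (block σ u.1))).le
    exact (Finset.mem_filter.1 hi).2 ▸ hσ i
  have henf := countP_isEnforcer_le hc
  have hdum := countP_isDummy_le hc hnd hsurv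
  have hsum := countP_isMatrix_add_isDummy_add_isEnforcer l
  have hlength : l.length = p.length + 1 := by simp [l]
  omega

/-- If `X 0, …, X (k-1) ∈ 𝒻` partition `[n]` and
`S' = {v_{i,j} : j ∈ [k], i ∉ X j}`, then no connected component of `G' - S'` contains
a simple path on `4d` vertices (i.e. `G' - S'` has no simple path on `4d` vertices). -/
theorem no_long_path_after_deletion (d n k : ℕ) (hd : 3 ≤ d) (hk : 1 ≤ k)
    (hn : n = d * k) (𝒻 : Finset (Finset (Fin n)))
    (hcard : ∀ X ∈ 𝒻, X.card = d)
    (X : Fin k → Finset (Fin n)) (hX : ∀ j : Fin k, X j ∈ 𝒻)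
    (hpart : ∀ i : Fin n, ∃! j : Fin k, i ∈ X j)
    (S' : Set (CVert n k d 𝒻))
    (hS' : S' = {w : CVert n k d 𝒻 | ∃ i : Fin n, ∃ j : Fin k,
      w = Sum.inl (i, j) ∧ i ∉ X j}) :
    ¬ ∃ (u v : ↥(S'ᶜ : Set (CVert n k d 𝒻)))
        (p : ((CGraph n k d 𝒻).induce (S'ᶜ : Set (CVert n k d 𝒻))).Walk u v),
        p.IsPath ∧ p.length + 1 = 4 * d :=
  no_long_path_after_deletion_general d n k 𝒻 hcard X hX hpart S' hS'
end
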